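/- Let F be a field, let b, s_i, s_{i+1} be natural numbers, and let V*_i : {0,1}^{s_i} × {0,1}^b → F, V*_{i+1} : {0,1}^{s_{i+1}} × {0,1}^b → F, and add_i, mult_i : {0,1}^{s_i + 2 s_{i+1}} → {0,1} be functions such that for all (p_1, p_2) ∈ {0,1}^{s_i} × {0,1}^b: V*_i(p_1, p_2) = Σ_{(ω_1, γ_1) ∈ {0,1}^{s_{i+1}} × {0,1}^{s_{i+1}}} [ add_i(p_1, ω_1, γ_1)·(V*_{i+1}(ω_1, p_2) + V*_{i+1}(γ_1, p_2)) + mult_i(p_1, ω_1, γ_1)·V*_{i+1}(ω_1, p_2)·V*_{i+1}(γ_1, p_2) ]. Then for every z ∈ F^{s_i + b}: Ṽ*_i(z) = Σ_{(p_1, p_2, ω_1, γ_1) ∈ {0,1}^{s_i} × {0,1}^b × {0,1}^{s_{i+1}} × {0,1}^{s_{i+1}}} β_{s_i + b}(z, (p_1, p_2))·( ãdd_i(p_1, ω_1, γ_1)·(Ṽ*_{i+1}(ω_1, p_2) + Ṽ*_{i+1}(γ_1, p_2)) + m̃ult_i(p_1, ω_1, γ_1)·Ṽ*_{i+1}(ω_1,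 p_2)·Ṽ*_{i+1}(γ_1, p_2) ), where tildes denote multilinear extensions. -/

import Mathlib

open MvPolynomial

/-- Coercion of a Boolean value to an element of a field (`true ↦ 1`, `false ↦ 0`). -/
def bF {F : Type*} [Field F] (b : Bool) : F := if b then 1 else 0

/-- Coercion of a Boolean vector to a vector of field elements. -/
def bvec {F : Type*} [Field F] {ι : Type*} (b : ι → Bool) : ι → F := fun i => bF (b i)

/-- `β_s(z, p) = ∏_j ((1-z_j)(1-p_j) + z_j p_j)`, as a function of `z, p ∈ F^s`. -/
def betaFn {F : Type*} [Field F] {ι : Type*} [Fintype ι] (z p : ι → F) : F :=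
  ∏ j, ((1 - z j) * (1 - p j) + z j * p j)

/-!
A multilinear polynomial is recovered from its values on the Boolean cube by Lagrange
interpolation, `P(z) = Σ_p β(z, p) P(p)`: for a multilinear monomial the sum over the cube
factors coordinatewise, and in each coordinate `Σ_{c ∈ {0,1}} β(x, c) c^e = x^e` for `e ≤ 1`.
Applying this to `Ṽ_i`, splitting the cube `{0,1}^{s_i + b}` as `{0,1}^{s_i} × {0,1}^b`, and
replacing each value `V_i(p₁, p₂)` by the wiring identity, in which every Boolean value equals
the corresponding multilinear extension, gives the claim.
-/

section Interpolation

variable {F : Type*} [Field F] {ι : Type*} [Fintype ι]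

lemma sum_bool_beta_mul_bF_pow (x : F) {e : ℕ} (he : e ≤ 1) :
    ∑ c : Bool, ((1 - x) * (1 - bF c) + x * bF c) * bF c ^ e = x ^ e := by
  interval_cases e <;> simp [bF]

lemma sum_betaFn_mul_prod_bvec_pow [DecidableEq ι] (z : ι → F) {d : ι → ℕ}
    (hd : ∀ j, d j ≤ 1) :
    ∑ p : ι → Bool, betaFn z (bvec p) * ∏ j, bvec p j ^ d j = ∏ j, z j ^ d j := by
  simp only [betaFn, bvec, ← Finset.prod_mul_distrib]
  rw [← Fintype.prod_sum fun j (c : Bool) => ((1 - z j) * (1 - bF c) + z j * bF c) * bF c ^ d j]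
  exact Finset.prod_congr rfl fun j _ => sum_bool_beta_mul_bF_pow (z j) (hd j)

lemma eval_eq_sum_betaFn_mul_eval_bvec [DecidableEq ι] {P : MvPolynomial ι F}
    (hP : ∀ j, P.degreeOf j ≤ 1) (z : ι → F) :
    eval z P = ∑ p : ι → Bool, betaFn z (bvec p) * eval (bvec p) P := by
  simp only [eval_eq', Finset.mul_sum]
  rw [Finset.sum_comm]
  refine Finset.sum_congr rfl fun d hd => ?_
  simp only [mul_left_comm _ (P.coeff d), ← Finset.mul_sum]
  rw [sum_betaFn_mul_prod_bvec_pow z fun j => (monomial_le_degreeOf j hd).trans (hP j)]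

end Interpolation

lemma Fintype.sum_pi_sum_elim {ι κ α M : Type*} [Fintype ι] [Fintype κ] [Fintype α]
    [DecidableEq ι] [DecidableEq κ] [AddCommMonoid M] (f : (ι ⊕ κ → α) → M) :
    ∑ p, f p = ∑ p₁ : ι → α, ∑ p₂ : κ → α, f (Sum.elim p₁ p₂) := by
  rw [← Fintype.sum_prod_type']
  exact Fintype.sum_equiv (Equiv.sumArrowEquivProdArrow ι κ α) _ _ fun p => by
    simp [Equiv.sumArrowEquivProdArrow]

theorem dataparallel_layer_identity_general (F : Type*) [Field F] (b si si1 : ℕ)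
    (Vi : (Fin si ⊕ Fin b → Bool) → F)
    (Vi1 : (Fin si1 ⊕ Fin b → Bool) → F)
    (addg multg : (Fin si → Bool) → (Fin si1 → Bool) → (Fin si1 → Bool) → Bool)
    (hwire : ∀ (p1 : Fin si → Bool) (p2 : Fin b → Bool),
        Vi (Sum.elim p1 p2)
          = ∑ w1 : Fin si1 → Bool, ∑ g1 : Fin si1 → Bool,
              (bF (addg p1 w1 g1) * (Vi1 (Sum.elim w1 p2) + Vi1 (Sum.elim g1 p2))
                + bF (multg p1 w1 g1) * (Vi1 (Sum.elim w1 p2) * Vi1 (Sum.elim g1 p2))))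
    (Pi : MvPolynomial (Fin si ⊕ Fin b) F)
    (hPiml : ∀ x, Pi.degreeOf x ≤ 1)
    (hPi : ∀ p : Fin si ⊕ Fin b → Bool, MvPolynomial.eval (bvec p) Pi = Vi p)
    (Pi1 : MvPolynomial (Fin si1 ⊕ Fin b) F)
    (hPi1 : ∀ p : Fin si1 ⊕ Fin b → Bool, MvPolynomial.eval (bvec p) Pi1 = Vi1 p)
    (Padd : MvPolynomial (Fin si ⊕ (Fin si1 ⊕ Fin si1)) F)
    (hPadd : ∀ (p1 : Fin si → Bool) (w1 g1 : Fin si1 → Bool),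
        MvPolynomial.eval (Sum.elim (bvec p1) (Sum.elim (bvec w1) (bvec g1))) Padd
          = bF (addg p1 w1 g1))
    (Pmult : MvPolynomial (Fin si ⊕ (Fin si1 ⊕ Fin si1)) F)
    (hPmult : ∀ (p1 : Fin si → Bool) (w1 g1 : Fin si1 → Bool),
        MvPolynomial.eval (Sum.elim (bvec p1) (Sum.elim (bvec w1) (bvec g1))) Pmult
          = bF (multg p1 w1 g1))
    (z : Fin si ⊕ Fin b → F) :
    MvPolynomial.eval z Pi
      = ∑ p1 : Fin si → Bool, ∑ p2 : Fin b → Bool,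
          ∑ w1 : Fin si1 → Bool, ∑ g1 : Fin si1 → Bool,
            betaFn z (bvec (Sum.elim p1 p2)) *
              (MvPolynomial.eval (Sum.elim (bvec p1) (Sum.elim (bvec w1) (bvec g1))) Padd *
                  (MvPolynomial.eval (bvec (Sum.elim w1 p2)) Pi1
                    + MvPolynomial.eval (bvec (Sum.elim g1 p2)) Pi1)
                + MvPolynomial.eval (Sum.elim (bvec p1) (Sum.elim (bvec w1) (bvec g1))) Pmult *
                    (MvPolynomial.eval (bvec (Sum.elim w1 p2)) Pi1
                      * MvPolynomial.eval (bvec (Sum.elim g1 p2)) Pi1)) := by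
  rw [eval_eq_sum_betaFn_mul_eval_bvec hPiml z, Fintype.sum_pi_sum_elim]
  simp only [hPi, hwire, hPadd, hPmult, hPi1, Finset.mul_sum]

/-- The per-layer identity for a data-parallel super-circuit consisting of `2^b`
disjoint copies of a circuit with wiring predicates `add_i`, `mult_i`:
a gate `(p₁,p₂)` (gate `p₁` in copy `p₂`) at layer `i` is connected to gates
`(ω₁,p₂)` and `(γ₁,p₂)` of the same copy. Then for every `z ∈ F^{s_i + b}`,
`Ṽ*_i(z) = Σ_{(p₁,p₂,ω₁,γ₁)} β_{s_i+b}(z,(p₁,p₂)) ·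
  (ãdd_i(p₁,ω₁,γ₁)·(Ṽ*_{i+1}(ω₁,p₂)+Ṽ*_{i+1}(γ₁,p₂))
    + m̃ult_i(p₁,ω₁,γ₁)·Ṽ*_{i+1}(ω₁,p₂)·Ṽ*_{i+1}(γ₁,p₂))`. -/
theorem dataparallel_layer_identity (F : Type*) [Field F] (b si si1 : ℕ)
    (Vi : (Fin si ⊕ Fin b → Bool) → F)
    (Vi1 : (Fin si1 ⊕ Fin b → Bool) → F)
    (addg multg : (Fin si → Bool) → (Fin si1 → Bool) → (Fin si1 → Bool) → Bool)
    (hwire : ∀ (p1 : Fin si → Bool) (p2 : Fin b → Bool),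
        Vi (Sum.elim p1 p2)
          = ∑ w1 : Fin si1 → Bool, ∑ g1 : Fin si1 → Bool,
              (bF (addg p1 w1 g1) * (Vi1 (Sum.elim w1 p2) + Vi1 (Sum.elim g1 p2))
                + bF (multg p1 w1 g1) * (Vi1 (Sum.elim w1 p2) * Vi1 (Sum.elim g1 p2))))
    (Pi : MvPolynomial (Fin si ⊕ Fin b) F)
    (hPiml : ∀ x, Pi.degreeOf x ≤ 1)
    (hPi : ∀ p : Fin si ⊕ Fin b → Bool, MvPolynomial.eval (bvec p) Pi = Vi p)
    (Pi1 : MvPolynomial (Fin si1 ⊕ Fin b) F)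
    (hPi1ml : ∀ x, Pi1.degreeOf x ≤ 1)
    (hPi1 : ∀ p : Fin si1 ⊕ Fin b → Bool, MvPolynomial.eval (bvec p) Pi1 = Vi1 p)
    (Padd : MvPolynomial (Fin si ⊕ (Fin si1 ⊕ Fin si1)) F)
    (hPaddml : ∀ x, Padd.degreeOf x ≤ 1)
    (hPadd : ∀ (p1 : Fin si → Bool) (w1 g1 : Fin si1 → Bool),
        MvPolynomial.eval (Sum.elim (bvec p1) (Sum.elim (bvec w1) (bvec g1))) Padd
          = bF (addg p1 w1 g1))
    (Pmult : MvPolynomial (Fin si ⊕ (Fin si1 ⊕ Fin si1)) F)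
    (hPmultml : ∀ x, Pmult.degreeOf x ≤ 1)
    (hPmult : ∀ (p1 : Fin si → Bool) (w1 g1 : Fin si1 → Bool),
        MvPolynomial.eval (Sum.elim (bvec p1) (Sum.elim (bvec w1) (bvec g1))) Pmult
          = bF (multg p1 w1 g1))
    (z : Fin si ⊕ Fin b → F) :
    MvPolynomial.eval z Pi
      = ∑ p1 : Fin si → Bool, ∑ p2 : Fin b → Bool,
          ∑ w1 : Fin si1 → Bool, ∑ g1 : Fin si1 → Bool,
            betaFn z (bvec (Sum.elim p1 p2)) *
              (MvPolynomial.eval (Sum.elim (bvec p1) (Sum.elim (bvec w1) (bvec g1))) Padd *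
                  (MvPolynomial.eval (bvec (Sum.elim w1 p2)) Pi1
                    + MvPolynomial.eval (bvec (Sum.elim g1 p2)) Pi1)
                + MvPolynomial.eval (Sum.elim (bvec p1) (Sum.elim (bvec w1) (bvec g1))) Pmult *
                    (MvPolynomial.eval (bvec (Sum.elim w1 p2)) Pi1
                      * MvPolynomial.eval (bvec (Sum.elim g1 p2)) Pi1)) :=
  dataparallel_layer_identity_general F b si si1 Vi Vi1 addg multg hwire Pi hPiml hPi Pi1 hPi1 Padd
    hPadd Pmult hPmult z
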